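/- Fix m, δ, I > 0 and d₁, d₂, d₃ ∈ ℝ with Iδ + d₃ > 0, and set Δ(N₁, N₂) = (m+δ)((m+δ)I + (m/δ)(N₁² + N₂²) + (m/δ)d₃ + d₃) (so Δ > 0 everywhere). Let (v_φ, N₁, N₂) : ℝ → ℝ³ be a differentiable curve satisfying the reduced system on the integral level set: v̇_φ = m v_φ (N₁ d₁ + N₂ d₂) / (2Δ(N₁, N₂)), Ṅ₁ = −((m+2δ)/(2(m+δ))) N₂ v_φ − δ d₁/(2(m+δ)), Ṅ₂ = ((m+2δ)/(2(m+δ))) N₁ v_φ − δ d₂/(2(m+δ)). Then the function F = (m(m+δ)/δ) v_φ² (N₁² + N₂²) + ((Iδ + d₃)(m+δ)²/δ) v_φ² is constant along the curve. -/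

import Mathlib

/-!
Along the curve the modified energy equals `v_φ² Δ(N₁, N₂)`. The `v_φ`-equation says that
`v̇_φ / v_φ = -Δ̇ / (2Δ)`, because the rotational parts of `Ṅ₁, Ṅ₂` do not change
`N₁² + N₂²` and the drift parts give `Δ̇ = -m (N₁ d₁ + N₂ d₂)`. Hence `v_φ² Δ` has zero
derivative.
-/

theorem hasDerivAt_sq_add_sq_of_rotation_add_drift {N₁ N₂ : ℝ → ℝ}
    {t ω c d₁ d₂ : ℝ} (h₁ : HasDerivAt N₁ (-ω * N₂ t - c * d₁) t)
    (h₂ : HasDerivAt N₂ (ω * N₁ t - c * d₂) t) :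
    HasDerivAt (fun s => N₁ s ^ 2 + N₂ s ^ 2) (-2 * c * (N₁ t * d₁ + N₂ t * d₂)) t :=
  ((h₁.fun_pow 2).add (h₂.fun_pow 2)).congr_deriv (by ring)

theorem hasDerivAt_sq_mul_eq_zero {v D : ℝ → ℝ} {t κ p : ℝ} (hD₀ : D t ≠ 0)
    (hv : HasDerivAt v (κ * v t * p / (2 * D t)) t) (hD : HasDerivAt D (-κ * p) t) :
    HasDerivAt (fun s => v s ^ 2 * D s) 0 t :=
  ((hv.fun_pow 2).mul hD).congr_deriv (by field_simp; ring)

section BallBearing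

variable {m δ I d₃ : ℝ}

theorem ballBearing_delta_pos (hm : 0 ≤ m) (hδ : 0 < δ) (hd₃ : 0 < I * δ + d₃)
    (a b : ℝ) :
    0 < (m + δ) * ((m + δ) * I + (m / δ) * (a ^ 2 + b ^ 2) + (m / δ) * d₃ + d₃) := by
  have hsplit : (m + δ) * I + (m / δ) * (a ^ 2 + b ^ 2) + (m / δ) * d₃ + d₃
      = (m / δ) * (a ^ 2 + b ^ 2) + (m + δ) / δ * (I * δ + d₃) := by
    field_simp
    ring
  rw [hsplit]
  have hmδ : 0 < m + δ := by linarith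
  positivity

theorem ballBearing_energy_eq_sq_mul_delta (hδ : δ ≠ 0) (v a b : ℝ) :
    (m * (m + δ) / δ) * v ^ 2 * (a ^ 2 + b ^ 2) + ((I * δ + d₃) * (m + δ) ^ 2 / δ) * v ^ 2
      = v ^ 2 * ((m + δ) * ((m + δ) * I + (m / δ) * (a ^ 2 + b ^ 2) + (m / δ) * d₃ + d₃)) := by
  field_simp
  ring

end BallBearing

theorem planar_ball_bearing_reduced_integral
    (m δ I d₁ d₂ d₃ : ℝ) (hm : 0 < m) (hδ : 0 < δ)
    (hd₃ : 0 < I * δ + d₃)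
    (Δ : ℝ → ℝ → ℝ)
    (hΔ : ∀ N₁ N₂ : ℝ,
      Δ N₁ N₂ = (m + δ) * ((m + δ) * I + (m / δ) * (N₁ ^ 2 + N₂ ^ 2) + (m / δ) * d₃ + d₃))
    (vφ N₁ N₂ : ℝ → ℝ)
    (hvφ : ∀ t : ℝ, HasDerivAt vφ
      (m * vφ t * (N₁ t * d₁ + N₂ t * d₂) / (2 * Δ (N₁ t) (N₂ t))) t)
    (hN₁ : ∀ t : ℝ, HasDerivAt N₁
      (-((m + 2 * δ) / (2 * (m + δ))) * N₂ t * vφ t - δ * d₁ / (2 * (m + δ))) t)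
    (hN₂ : ∀ t : ℝ, HasDerivAt N₂
      (((m + 2 * δ) / (2 * (m + δ))) * N₁ t * vφ t - δ * d₂ / (2 * (m + δ))) t) :
    ∀ s t : ℝ,
      (m * (m + δ) / δ) * vφ s ^ 2 * (N₁ s ^ 2 + N₂ s ^ 2)
          + ((I * δ + d₃) * (m + δ) ^ 2 / δ) * vφ s ^ 2 =
        (m * (m + δ) / δ) * vφ t ^ 2 * (N₁ t ^ 2 + N₂ t ^ 2)
          + ((I * δ + d₃) * (m + δ) ^ 2 / δ) * vφ t ^ 2 := by
  have hmδ : m + δ ≠ 0 := by positivity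
  have hnorm (u : ℝ) : HasDerivAt (fun s => N₁ s ^ 2 + N₂ s ^ 2)
      (-2 * (δ / (2 * (m + δ))) * (N₁ u * d₁ + N₂ u * d₂)) u :=
    hasDerivAt_sq_add_sq_of_rotation_add_drift (ω := (m + 2 * δ) / (2 * (m + δ)) * vφ u)
      ((hN₁ u).congr_deriv (by ring)) ((hN₂ u).congr_deriv (by ring))
  have hdelta (u : ℝ) :
      HasDerivAt (fun s => Δ (N₁ s) (N₂ s)) (-m * (N₁ u * d₁ + N₂ u * d₂)) u := by
    simp only [hΔ]
    refine ((((hnorm u).const_mul (m / δ)).const_add ((m + δ) * I)).add_const _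
      |>.add_const _ |>.const_mul (m + δ)).congr_deriv ?_
    field_simp
  have henergy (u : ℝ) := hasDerivAt_sq_mul_eq_zero
    (hΔ _ _ ▸ (ballBearing_delta_pos hm.le hδ hd₃ _ _).ne') (hvφ u) (hdelta u)
  intro s t
  rw [ballBearing_energy_eq_sq_mul_delta hδ.ne', ballBearing_energy_eq_sq_mul_delta hδ.ne',
    ← hΔ, ← hΔ]
  exact is_const_of_deriv_eq_zero (fun u => (henergy u).differentiableAt)
    (fun u => (henergy u).deriv) s t
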